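/- arXiv:1602.02681 — 4 statements merged into one kernel-verified Lean document; each statement's English description precedes it below -/
import Mathlib

section
/- For every real number p, the Gaussian-regularized Fourier series of the sawtooth function converges to its pointwise value: lim_{ε→0⁺} Σ_{n=1}^{∞} (sin(2πnp)/(πn))·e^{−επn²} = −B̄₁(p). -/
/-!
Summation by parts shows that any family of decreasing summable weights tending pointwise to `1`,
such as `exp (-ε π (n + 1)²)` as `ε → 0⁺`, leaves the sum of a convergent series unchanged in the
limit. It therefore suffices that the Fourier series of `-B̄₁` converges to `1/2 - {p}` at every
non-integer `p`. By Dirichlet's test `∑ zⁿ / n` converges on the unit circle away from `z = 1`,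
Abel's limit theorem identifies its sum with `-log (1 - z)`, and for `z = exp (2πip)` the imaginary
part of `-log (1 - z)` is `-arg (1 - z) = π (1/2 - {p})`. At integers every term vanishes.
-/

open Real Filter Finset Topology

/-- The first periodic Bernoulli polynomial (sawtooth function):
`B̄₁(x) = x − ⌊x⌋ − 1/2` if `x ∉ ℤ`, and `B̄₁(x) = 0` if `x ∈ ℤ`. -/
noncomputable def sawtooth (x : ℝ) : ℝ :=
  open scoped Classical in
  if ∃ n : ℤ, x = (n : ℝ) then 0 else Int.fract x - 1/2

theorem sum_range_mul_eq_by_parts {R : Type*} [CommRing R] (a w : ℕ → R) (L : R) (N : ℕ) :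
    ∑ n ∈ range N, a n * w n = L * w 0 +
      ∑ n ∈ range N, (w n - w (n + 1)) * (∑ k ∈ range (n + 1), a k - L) +
      (∑ k ∈ range N, a k - L) * w N := by
  induction N with
  | zero => simp
  | succ N ih => rw [sum_range_succ, ih, sum_range_succ _ N, sum_range_succ a N]; ring

theorem abs_sum_range_mul_sub_le {a w : ℕ → ℝ} {L M δ : ℝ} {K N : ℕ} (hw : Antitone w)
    (hw_nonneg : ∀ n, 0 ≤ w n) (hM : ∀ n, |∑ k ∈ range n, a k - L| ≤ M)
    (hδ : ∀ n ≥ K, |∑ k ∈ range n, a k - L| ≤ δ) (hKN : K ≤ N) :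
    |∑ n ∈ range N, a n * w n - L * w 0| ≤ M * (w 0 - w K) + δ * w K := by
  set c : ℕ → ℝ := fun n ↦ ∑ k ∈ range n, a k - L
  have hd : ∀ n, 0 ≤ w n - w (n + 1) := fun n ↦ sub_nonneg.2 (hw n.le_succ)
  have hhead : |∑ n ∈ range K, (w n - w (n + 1)) * c (n + 1)| ≤ M * (w 0 - w K) := calc
    _ ≤ ∑ n ∈ range K, (w n - w (n + 1)) * M := by
      refine (abs_sum_le_sum_abs _ _).trans (sum_le_sum fun n _ ↦ ?_)
      rw [abs_mul, abs_of_nonneg (hd n)]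
      exact mul_le_mul_of_nonneg_left (hM _) (hd n)
    _ = M * (w 0 - w K) := by rw [← sum_mul, sum_range_sub', mul_comm]
  have htail : |∑ n ∈ Ico K N, (w n - w (n + 1)) * c (n + 1)| ≤ δ * (w K - w N) := calc
    _ ≤ ∑ n ∈ Ico K N, (w n - w (n + 1)) * δ := by
      refine (abs_sum_le_sum_abs _ _).trans (sum_le_sum fun n hn ↦ ?_)
      rw [abs_mul, abs_of_nonneg (hd n)]
      exact mul_le_mul_of_nonneg_left (hδ _ (by linarith [(mem_Ico.1 hn).1])) (hd n)
    _ = δ * (w K - w N) := by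
      rw [← sum_mul, mul_comm, ← neg_sub (w N), ← sum_Ico_sub (f := w) hKN, ← sum_neg_distrib]
      simp_rw [neg_sub]
  have hlast : |c N * w N| ≤ δ * w N := by
    rw [abs_mul, abs_of_nonneg (hw_nonneg N)]
    exact mul_le_mul_of_nonneg_right (hδ N hKN) (hw_nonneg N)
  rw [sum_range_mul_eq_by_parts a w L, ← sum_range_add_sum_Ico _ hKN, add_assoc (L * w 0),
    add_sub_cancel_left]
  calc _ ≤ M * (w 0 - w K) + δ * (w K - w N) + δ * w N :=
      (abs_add_le _ _).trans (add_le_add ((abs_add_le _ _).trans (add_le_add hhead htail)) hlast)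
    _ = M * (w 0 - w K) + δ * w K := by ring

theorem tendsto_tsum_mul_of_tendsto_sum_range {ι : Type*} {l : Filter ι} {a : ℕ → ℝ} {L : ℝ}
    {w : ι → ℕ → ℝ} (ha : Tendsto (fun N ↦ ∑ n ∈ range N, a n) atTop (𝓝 L))
    (hanti : ∀ᶠ i in l, Antitone (w i)) (hsum : ∀ᶠ i in l, Summable (w i))
    (hw : ∀ n, Tendsto (fun i ↦ w i n) l (𝓝 1)) :
    Tendsto (fun i ↦ ∑' n, a n * w i n) l (𝓝 L) := by
  obtain ⟨M, hM⟩ := ((ha.sub_const L).abs).bddAbove_range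
  have ha0 : Tendsto a atTop (𝓝 0) := by
    simpa [sum_range_succ] using (ha.comp (tendsto_add_atTop_nat 1)).sub ha
  suffices Tendsto (fun i ↦ ∑' n, a n * w i n - L * w i 0) l (𝓝 0) by
    simpa using this.add ((hw 0).const_mul L)
  refine Metric.tendsto_nhds.2 fun δ hδ ↦ ?_
  obtain ⟨K, hK⟩ := Metric.tendsto_atTop.1 ha (δ / 2) (half_pos hδ)
  have hbound : Tendsto (fun i ↦ M * (w i 0 - w i K) + δ / 2 * w i K) l (𝓝 (δ / 2)) := by
    simpa using (((hw 0).sub (hw K)).const_mul M).add ((hw K).const_mul (δ / 2))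
  filter_upwards [hanti, hsum, hbound.eventually_lt_const (half_lt_self hδ)]
    with i hanti hsum hlt
  have hw_nonneg : ∀ n, 0 ≤ w i n := hanti.le_of_tendsto hsum.tendsto_atTop_zero
  have has : Summable (fun n ↦ a n * w i n) := summable_of_isBigO_nat hsum <| by
    simpa using (ha0.isBigO_one ℝ).mul (Asymptotics.isBigO_refl (w i) atTop)
  rw [Real.dist_0_eq_abs]
  refine lt_of_le_of_lt (le_of_tendsto (has.hasSum.tendsto_sum_nat.sub_const _).abs ?_) hlt
  filter_upwards [eventually_ge_atTop K] with N hN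
  exact abs_sum_range_mul_sub_le hanti hw_nonneg (fun n ↦ hM (Set.mem_range_self n))
    (fun n hn ↦ (hK n hn).le) hN

theorem antitone_exp_neg_mul_succ_sq {ε c : ℝ} (hε : 0 ≤ ε) (hc : 0 ≤ c) :
    Antitone fun n : ℕ ↦ exp (-ε * c * ((n : ℝ) + 1) ^ 2) := fun m n hmn ↦ by
  have : ((m : ℝ) + 1) ^ 2 ≤ ((n : ℝ) + 1) ^ 2 := by gcongr
  simp only [exp_le_exp, neg_mul]
  exact neg_le_neg (mul_le_mul_of_nonneg_left this (mul_nonneg hε hc))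

theorem summable_exp_neg_mul_succ_sq {ε c : ℝ} (hε : 0 < ε) (hc : 0 < c) :
    Summable fun n : ℕ ↦ exp (-ε * c * ((n : ℝ) + 1) ^ 2) := by
  simpa [neg_mul] using summable_exp_nat_mul_of_ge (c := -(ε * c)) (by simp; positivity)
    (f := fun n : ℕ ↦ ((n : ℝ) + 1) ^ 2) fun n ↦ by nlinarith

theorem tendsto_exp_neg_mul_succ_sq (c : ℝ) (n : ℕ) :
    Tendsto (fun ε ↦ exp (-ε * c * ((n : ℝ) + 1) ^ 2)) (𝓝 0) (𝓝 1) := by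
  simpa using (by fun_prop : Continuous fun ε : ℝ ↦ exp (-ε * c * ((n : ℝ) + 1) ^ 2)).tendsto 0

lemma norm_sum_range_pow_succ_le {𝕜 : Type*} [NormedDivisionRing 𝕜] {z : 𝕜} (hz : ‖z‖ ≤ 1)
    (hz1 : z ≠ 1) (n : ℕ) : ‖∑ i ∈ range n, z ^ (i + 1)‖ ≤ 2 / ‖z - 1‖ := by
  have hgeom : ∑ i ∈ range n, z ^ (i + 1) = z * ((z ^ n - 1) / (z - 1)) := by
    simp_rw [← geom_sum_eq hz1, mul_sum, pow_succ']
  have hnum : ‖z ^ n - 1‖ ≤ 2 := calc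
    ‖z ^ n - 1‖ ≤ ‖z‖ ^ n + 1 := by simpa using norm_sub_le (z ^ n) 1
    _ ≤ 2 := by linarith [pow_le_one₀ (norm_nonneg z) hz (n := n)]
  calc ‖∑ i ∈ range n, z ^ (i + 1)‖ = ‖z‖ * (‖z ^ n - 1‖ / ‖z - 1‖) := by
        rw [hgeom, norm_mul, norm_div]
    _ ≤ 1 * (2 / ‖z - 1‖) := by gcongr
    _ = 2 / ‖z - 1‖ := one_mul _

namespace Complex

lemma one_sub_mem_slitPlane_of_norm_le_one {z : ℂ} (hz : ‖z‖ ≤ 1) (hz1 : z ≠ 1) :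
    1 - z ∈ slitPlane := by
  refine mem_slitPlane_iff.2 (Or.inl ?_)
  rw [sub_re, one_re, sub_pos]
  by_contra! hre
  have hnorm : z.re * z.re + z.im * z.im ≤ 1 := by
    rw [← normSq_apply, normSq_eq_norm_sq]
    nlinarith [norm_nonneg z]
  have hre1 : z.re = 1 := by nlinarith [mul_self_nonneg z.im]
  have him0 : z.im = 0 := by nlinarith [mul_self_nonneg z.im]
  exact hz1 (ext hre1 him0)

theorem tendsto_sum_range_pow_succ_div {z : ℂ} (hz : ‖z‖ ≤ 1) (hz1 : z ≠ 1) :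
    Tendsto (fun N ↦ ∑ n ∈ range N, z ^ (n + 1) / (n + 1)) atTop (𝓝 (-log (1 - z))) := by
  obtain ⟨L, hL⟩ : ∃ L, Tendsto (fun N ↦ ∑ n ∈ range N, z ^ (n + 1) / (n + 1)) atTop (𝓝 L) := by
    refine cauchySeq_tendsto_of_complete ?_
    have hdiv : ∀ n : ℕ, z ^ (n + 1) / (n + 1) = (1 / ((n : ℝ) + 1)) • z ^ (n + 1) := fun n ↦ by
      rw [real_smul]; push_cast; ring
    simp_rw [hdiv]
    exact Antitone.cauchySeq_series_mul_of_tendsto_zero_of_bounded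
      (fun m n hmn ↦ by gcongr) tendsto_one_div_add_atTop_nhds_zero_nat
      (norm_sum_range_pow_succ_le hz hz1)
  have hL' : Tendsto (fun N ↦ ∑ n ∈ range N, z ^ n / n) atTop (𝓝 L) := by
    rw [← tendsto_add_atTop_iff_nat 1]
    -- the `n = 0` term is `1 / 0 = 0`
    simpa [sum_range_succ'] using hL
  have habel := tendsto_tsum_powerSeries_nhdsWithin_lt hL'
  have hlog : Tendsto (fun x : ℂ ↦ ∑' n : ℕ, z ^ n / n * x ^ n) ((𝓝[<] (1 : ℝ)).map ofReal)
      (𝓝 (-log (1 - z))) := by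
    have hcont : ContinuousAt (fun x : ℂ ↦ -log (1 - x * z)) 1 := by
      have : ContinuousAt log (1 - 1 * z) :=
        continuousAt_clog (by simpa using one_sub_mem_slitPlane_of_norm_le_one hz hz1)
      fun_prop
    have hmap : (𝓝[<] (1 : ℝ)).map ofReal ≤ 𝓝 1 := by
      rw [← ofReal_one]; exact (continuous_ofReal.tendsto 1).mono_left nhdsWithin_le_nhds
    refine (by simpa using hcont.tendsto.mono_left hmap : Tendsto _ _ _).congr' ?_
    rw [EventuallyEq, eventually_map]
    filter_upwards [Ioo_mem_nhdsLT (show (-1 : ℝ) < 1 by norm_num)] with x hx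
    have hxz : ‖(x : ℂ) * z‖ < 1 := by
      rw [norm_mul, norm_real, norm_eq_abs]
      exact (mul_le_of_le_one_right (abs_nonneg x) hz).trans_lt (abs_lt.2 hx)
    simp_rw [← (hasSum_taylorSeries_neg_log hxz).tsum_eq, mul_pow]
    exact tsum_congr fun n ↦ by ring
  rwa [tendsto_nhds_unique habel hlog] at hL

lemma one_sub_exp_mul_I (θ : ℝ) :
    1 - exp (θ * I) = (2 * Real.sin (θ / 2) : ℝ) * exp ((θ - π) / 2 * I) := by
  have h : exp ((θ - π) / 2 * I) = -I * exp (θ / 2 * I) := by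
    rw [show (θ - π) / 2 * I = θ / 2 * I + -(π / 2 * I) by ring, exp_add, exp_neg,
      exp_pi_div_two_mul_I, inv_I]; ring
  have h2 : exp (θ * I) = exp (θ / 2 * I) ^ 2 := by rw [← exp_nat_mul]; push_cast; ring_nf
  push_cast
  rw [h, h2, sin, neg_mul, exp_neg]
  field_simp
  linear_combination (1 - exp (θ * I / 2) ^ 2) * I_sq

lemma arg_one_sub_exp_mul_I {θ : ℝ} (h0 : 0 < θ) (h2π : θ < 2 * π) :
    arg (1 - exp (θ * I)) = (θ - π) / 2 := by
  have hsin : 0 < 2 * Real.sin (θ / 2) := by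
    linarith [sin_pos_of_pos_of_lt_pi (x := θ / 2) (by linarith) (by linarith)]
  rw [one_sub_exp_mul_I, arg_real_mul _ hsin, ← ofReal_ofNat, ← ofReal_sub, ← ofReal_div,
    arg_exp_mul_I, toIocMod_eq_self]
  constructor <;> linarith

end Complex

open Complex in
theorem tendsto_sum_range_sin_two_pi_mul_div {p : ℝ} (hp : ¬∃ n : ℤ, p = n) :
    Tendsto (fun N ↦ ∑ n ∈ range N, Real.sin (2 * π * ((n : ℝ) + 1) * p) / (π * ((n : ℝ) + 1)))
      atTop (𝓝 (1 / 2 - Int.fract p)) := by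
  set z := exp ((2 * π * p : ℝ) * I) with hz
  clear_value z
  have hnorm : ‖z‖ = 1 := by rw [hz, norm_exp_ofReal_mul_I]
  have hz1 : z ≠ 1 := by
    rw [hz]
    intro h
    obtain ⟨n, hn⟩ := exp_eq_one_iff.1 h
    refine hp ⟨n, ?_⟩
    have him : 2 * π * p = n * (2 * π) := by simpa using congrArg im hn
    exact mul_left_cancel₀ two_pi_pos.ne' (by linear_combination him)
  have hfract : z = exp ((2 * π * Int.fract p : ℝ) * I) := by
    have hsplit : (2 * π * p : ℝ) * I = (2 * π * Int.fract p : ℝ) * I + ⌊p⌋ * (2 * π * I) := by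
      rw [Int.fract]; push_cast; ring
    rw [hz, hsplit, Complex.exp_add, exp_int_mul_two_pi_mul_I, mul_one]
  have hθ : 0 < 2 * π * Int.fract p := by
    have : 0 < Int.fract p := Int.fract_pos.2 fun h ↦ hp ⟨⌊p⌋, h⟩
    positivity
  have hθ' : 2 * π * Int.fract p < 2 * π := by
    have := Int.fract_lt_one p
    nlinarith [pi_pos]
  have h := ((continuous_im.tendsto _).comp
    (tendsto_sum_range_pow_succ_div hnorm.le hz1)).div_const π
  convert h using 2 with N
  · simp only [Function.comp_apply, im_sum, sum_div]
    refine sum_congr rfl fun n _ ↦ ?_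
    have hpow : z ^ (n + 1) = exp ((2 * π * ((n : ℝ) + 1) * p : ℝ) * I) := by
      rw [hz, ← Complex.exp_nat_mul]; push_cast; ring_nf
    rw [hpow, show ((n : ℂ) + 1) = ((n + 1 : ℝ) : ℂ) by push_cast; rfl, div_ofReal_im,
      exp_ofReal_mul_I_im, div_div, mul_comm π]
  · rw [neg_im, log_im, hfract, arg_one_sub_exp_mul_I hθ hθ']
    field_simp
    ring

/-- The Gaussian-regularized Fourier series of the sawtooth function converges
pointwise to `−B̄₁(p)` as the regularization parameter `ε` tends to `0⁺`. -/
theorem tendsto_regularized_sawtooth_series (p : ℝ) :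
    Filter.Tendsto
      (fun ε : ℝ => ∑' n : ℕ,
        Real.sin (2 * π * ((n : ℝ) + 1) * p) / (π * ((n : ℝ) + 1)) *
          Real.exp (-ε * π * ((n : ℝ) + 1) ^ 2))
      (nhdsWithin 0 (Set.Ioi 0)) (nhds (-sawtooth p)) := by
  by_cases hp : ∃ n : ℤ, p = n
  · obtain ⟨m, rfl⟩ := hp
    have hsin (n : ℕ) : Real.sin (2 * π * ((n : ℝ) + 1) * m) = 0 := by
      rw [show 2 * π * ((n : ℝ) + 1) * m = ((2 * (n + 1) * m : ℤ) : ℝ) * π by push_cast; ring]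
      exact sin_int_mul_pi _
    simp [sawtooth, hsin]
  · rw [sawtooth, if_neg hp, neg_sub]
    refine tendsto_tsum_mul_of_tendsto_sum_range (tendsto_sum_range_sin_two_pi_mul_div hp) ?_ ?_
      fun n ↦ (tendsto_exp_neg_mul_succ_sq π n).mono_left nhdsWithin_le_nhds
    · filter_upwards [self_mem_nhdsWithin] with ε hε
      exact antitone_exp_neg_mul_succ_sq (le_of_lt hε) pi_pos.le
    · filter_upwards [self_mem_nhdsWithin] with ε hε
      exact summable_exp_neg_mul_succ_sq hε pi_pos
end

section
/- Let P ⊂ ℝ^d be a polytope (the convex hull of a finite set of points), let g : ℝ^d → ℝ be continuous, and let f be the function equal to g on P and equal to 0 outside P. Then for every x ∈ ℝ^d, lim_{ε→0⁺} ∫_{ℝ^d} f(y)·G_ε(x−y) dy = f(x)·ω_P(x), where ω_P(x) = ∫_{K_x} e^{−π‖v‖²} dv and K_x = {v ∈ ℝ^d : ∃ δ>0 with x+δv ∈ P} is the cone of feasible directions of P at x. -/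
/-!
Substituting `y = x + √ε • v` turns the convolution into
`∫ f (x + √ε • v) * exp (-π * ‖v‖ ^ 2) dv`. For `x ∈ P` and `P` convex, the point `x + t • v`
lies in `P` for all small `t > 0` when `v` is a feasible direction and for no `t > 0` otherwise,
so the integrand tends to `f x * 1_{K_x} v * exp (-π * ‖v‖ ^ 2)`; for `x ∉ P` it tends to `0`
because `P` is closed. Since `f` is bounded, dominated convergence concludes; `K_x` is convex,
hence Lebesgue measurable.
-/

open Real MeasureTheory Filter Topology Set Module

def feasibleCone {E : Type*} [AddCommGroup E] [Module ℝ E] (P : Set E) (x : E) : Set E :=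
  {v | ∃ δ : ℝ, 0 < δ ∧ x + δ • v ∈ P}

section Convex

variable {E : Type*} [AddCommGroup E] [Module ℝ E] {P : Set E} {x v : E}

theorem Convex.eventually_add_smul_mem (hP : Convex ℝ P) (hx : x ∈ P)
    (hv : v ∈ feasibleCone P x) : ∀ᶠ t in 𝓝[>] (0 : ℝ), x + t • v ∈ P := by
  obtain ⟨δ, hδ, hδv⟩ := hv
  filter_upwards [Ioo_mem_nhdsGT hδ] with t ⟨ht0, htδ⟩
  have h := hP.add_smul_mem hx hδv ⟨by positivity, (div_le_one hδ).2 htδ.le⟩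
  rwa [smul_smul, div_mul_cancel₀ _ hδ.ne'] at h

theorem Convex.feasibleCone (hP : Convex ℝ P) : Convex ℝ (feasibleCone P x) := by
  rintro v ⟨δ, hδ, hδv⟩ w ⟨η, hη, hηw⟩ a b ha hb hab
  -- `x + γ • (a • v + b • w)` is the convex combination of `x + δ • v` and `x + η • w`
  -- with weights `γ a / δ` and `γ b / η`
  set γ := (a / δ + b / η)⁻¹
  have hs : 0 < a / δ + b / η := by
    rcases ha.lt_or_eq with ha | rfl
    · positivity
    · rw [zero_add] at hab; subst hab; simpa using hη
  refine ⟨γ, inv_pos.2 hs, ?_⟩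
  have hw : γ * (a / δ) + γ * (b / η) = 1 := by rw [← mul_add, inv_mul_cancel₀ hs.ne']
  have hδ' : γ * (a / δ) * δ = γ * a := by field_simp
  have hη' : γ * (b / η) * η = γ * b := by field_simp
  convert hP hδv hηw (by positivity) (by positivity) hw using 1
  simp only [smul_add, smul_smul]
  rw [hδ', hη', eq_sub_of_add_eq' hw]
  module

end Convex

theorem tendsto_indicator_add_smul_nhdsGT {E F : Type*} [NormedAddCommGroup E] [NormedSpace ℝ E]
    [TopologicalSpace F] [Zero F] {P : Set E} (hPc : IsClosed P) (hP : Convex ℝ P) {g : E → F}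
    (hg : ContinuousOn g P) (x v : E) :
    Tendsto (fun t : ℝ => P.indicator g (x + t • v)) (𝓝[>] 0)
      (𝓝 ((feasibleCone P x).indicator (fun _ => P.indicator g x) v)) := by
  have hline : Tendsto (fun t : ℝ => x + t • v) (𝓝[>] 0) (𝓝 x) := by
    have hcont : Continuous fun t : ℝ => x + t • v := by fun_prop
    simpa using (hcont.tendsto 0).mono_left nhdsWithin_le_nhds
  by_cases hx : x ∈ P
  · by_cases hv : v ∈ feasibleCone P x
    · have hin := hP.eventually_add_smul_mem hx hv
      rw [indicator_of_mem hv, indicator_of_mem hx]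
      refine ((hg x hx).tendsto.comp (tendsto_nhdsWithin_iff.2 ⟨hline, hin⟩)).congr' ?_
      filter_upwards [hin] with t ht
      exact (indicator_of_mem ht g).symm
    · rw [indicator_of_notMem hv]
      refine tendsto_const_nhds.congr' ?_
      filter_upwards [self_mem_nhdsWithin] with t (ht : 0 < t)
      exact (indicator_of_notMem (fun h => hv ⟨t, ht, h⟩) g).symm
  · rw [indicator_of_notMem hx, indicator_zero]
    refine tendsto_const_nhds.congr' ?_
    filter_upwards [hline (hPc.isOpen_compl.mem_nhds hx)] with t ht
    exact (indicator_of_notMem ht g).symm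

theorem IsCompact.exists_forall_norm_indicator_le {α E : Type*} [TopologicalSpace α]
    [SeminormedAddGroup E] {P : Set α} (hP : IsCompact P) {g : α → E} (hg : ContinuousOn g P) :
    ∃ M, ∀ z, ‖P.indicator g z‖ ≤ M := by
  obtain ⟨C, hC⟩ := hP.exists_bound_of_continuousOn hg
  refine ⟨max C 0, fun z => ?_⟩
  by_cases hz : z ∈ P
  · rw [indicator_of_mem hz]
    exact (hC z hz).trans (le_max_left _ _)
  · simp [hz]

section HeatKernel

variable {E : Type*} [NormedAddCommGroup E] [InnerProductSpace ℝ E] [FiniteDimensional ℝ E]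
  [MeasurableSpace E] [BorelSpace E]

noncomputable def heatKernel (ε : ℝ) (z : E) : ℝ :=
  ε ^ (-(finrank ℝ E : ℝ) / 2) * exp (-π * ‖z‖ ^ 2 / ε)

theorem integrable_exp_neg_pi_mul_sq_norm : Integrable fun v : E => exp (-π * ‖v‖ ^ 2) := by
  refine Integrable.of_integral_ne_zero ?_
  rw [GaussianFourier.integral_rexp_neg_mul_sq_norm pi_pos, div_self pi_ne_zero, one_rpow]
  exact one_ne_zero

theorem integral_mul_heatKernel_eq {ε : ℝ} (hε : 0 < ε) (f : E → ℝ) (x : E) :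
    ∫ y, f y * heatKernel ε (x - y) = ∫ v, f (x + √ε • v) * exp (-π * ‖v‖ ^ 2) := by
  set G : E → ℝ := fun w => f (x + w) * exp (-π * ‖w‖ ^ 2 / ε)
  have hscale : ∀ v : E, f (x + √ε • v) * exp (-π * ‖v‖ ^ 2) = G (√ε • v) := by
    intro v
    simp only [G, norm_smul, norm_of_nonneg (sqrt_nonneg ε), mul_pow, sq_sqrt hε.le]
    field_simp
  have hpow : (√ε ^ finrank ℝ E)⁻¹ = ε ^ (-(finrank ℝ E : ℝ) / 2) := by
    rw [sqrt_eq_rpow, ← rpow_natCast, ← rpow_mul hε.le, ← rpow_neg hε.le]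
    ring_nf
  calc ∫ y, f y * heatKernel ε (x - y)
      = ε ^ (-(finrank ℝ E : ℝ) / 2) * ∫ w, G w := by
        rw [← integral_const_mul, ← integral_add_left_eq_self _ x]
        congr 1 with w
        simp only [heatKernel, G, sub_add_cancel_left, norm_neg]
        ring
    _ = ∫ v, f (x + √ε • v) * exp (-π * ‖v‖ ^ 2) := by
        simp only [hscale, Measure.integral_comp_smul_of_nonneg volume G √ε (hR := sqrt_nonneg ε),
          hpow, smul_eq_mul]

theorem tendsto_integral_indicator_mul_heatKernel {P : Set E} (hPk : IsCompact P)
    (hP : Convex ℝ P) {g : E → ℝ} (hg : ContinuousOn g P) (x : E) :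
    Tendsto (fun ε => ∫ y, P.indicator g y * heatKernel ε (x - y)) (𝓝[>] 0)
      (𝓝 (P.indicator g x * ∫ v in feasibleCone P x, exp (-π * ‖v‖ ^ 2))) := by
  classical
  obtain ⟨M, hM⟩ := hPk.exists_forall_norm_indicator_le hg
  have hmeas : Measurable (P.indicator g) := by
    rw [← piecewise_eq_indicator]
    exact hg.measurable_piecewise continuousOn_const hPk.isClosed.measurableSet
  have hsqrt : Tendsto Real.sqrt (𝓝[>] 0) (𝓝[>] 0) :=
    tendsto_nhdsWithin_iff.2 ⟨(continuous_sqrt.tendsto' 0 0 sqrt_zero).mono_left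
      nhdsWithin_le_nhds, eventually_mem_nhdsWithin.mono fun ε hε => sqrt_pos.2 hε⟩
  have hlimit : ∫ v, (feasibleCone P x).indicator (fun _ => P.indicator g x) v *
      exp (-π * ‖v‖ ^ 2) = P.indicator g x * ∫ v in feasibleCone P x, exp (-π * ‖v‖ ^ 2) := by
    have hind : ∀ v, (feasibleCone P x).indicator (fun _ => P.indicator g x) v *
        exp (-π * ‖v‖ ^ 2) = (feasibleCone P x).indicator
          (fun v => P.indicator g x * exp (-π * ‖v‖ ^ 2)) v :=
      fun v => (indicator_mul_left _ (fun _ => P.indicator g x) fun v => exp (-π * ‖v‖ ^ 2)).symm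
    simp only [hind]
    rw [integral_indicator₀ (hP.feasibleCone.nullMeasurableSet volume), integral_const_mul]
  rw [← hlimit]
  refine Tendsto.congr' (eventually_mem_nhdsWithin.mono fun ε hε =>
    (integral_mul_heatKernel_eq hε _ x).symm) ?_
  refine tendsto_integral_filter_of_dominated_convergence (fun v => M * exp (-π * ‖v‖ ^ 2))
    (Eventually.of_forall fun ε => ?_) (Eventually.of_forall fun ε => ae_of_all _ fun v => ?_)
    (integrable_exp_neg_pi_mul_sq_norm.const_mul M) (ae_of_all _ fun v => ?_)
  · exact ((hmeas.comp (measurable_const_add x |>.comp (measurable_const_smul _))).mul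
      (by fun_prop)).aestronglyMeasurable
  · rw [norm_mul, norm_of_nonneg (exp_pos _).le]
    exact mul_le_mul_of_nonneg_right (hM _) (exp_pos _).le
  · exact ((tendsto_indicator_add_smul_nhdsGT hPk.isClosed hP hg x v).comp hsqrt).mul_const _

end HeatKernel

/-- Convolution of a continuous function supported on a polytope with the heat kernel
`G_ε(x) = ε^{−d/2} e^{−π‖x‖²/ε}` converges, as `ε → 0⁺`, to the value of the function
times the solid angle `ω_P(x)`, the Gaussian measure of the cone of feasible directions
of the polytope `P` at `x`. -/
theorem tendsto_heat_convolution_solid_angle {d : ℕ}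
    (S : Finset (EuclideanSpace ℝ (Fin d)))
    (g : EuclideanSpace ℝ (Fin d) → ℝ) (hg : Continuous g)
    (f : EuclideanSpace ℝ (Fin d) → ℝ)
    (hf : ∀ y, f y = open scoped Classical in if y ∈ convexHull ℝ (S : Set (EuclideanSpace ℝ (Fin d)))
      then g y else 0)
    (x : EuclideanSpace ℝ (Fin d)) :
    Filter.Tendsto
      (fun ε : ℝ => ∫ y,
        f y * (ε ^ (-(d : ℝ) / 2) * Real.exp (-π * ‖x - y‖ ^ 2 / ε)))
      (nhdsWithin 0 (Set.Ioi 0))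
      (nhds (f x * ∫ v in {v : EuclideanSpace ℝ (Fin d) |
          ∃ δ : ℝ, 0 < δ ∧ x + δ • v ∈ convexHull ℝ (S : Set (EuclideanSpace ℝ (Fin d)))},
        Real.exp (-π * ‖v‖ ^ 2))) := by
  classical
  obtain rfl : f = (convexHull ℝ (S : Set (EuclideanSpace ℝ (Fin d)))).indicator g :=
    funext fun y => by rw [hf, indicator_apply]
  have h := tendsto_integral_indicator_mul_heatKernel (S.finite_toSet.isCompact_convexHull ℝ)
    (convex_convexHull ℝ _) hg.continuousOn x
  simp only [heatKernel, finrank_euclideanSpace_fin] at h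
  exact h
end

section
/- Let h and k be coprime positive integers and let t be a positive integer. Then A_Δ(t) = (hk/2)·t² + (1/12)·(h/k + 1/(hk) + k/h) − 1/4 − s(h,k) − s(k,h). -/
open Real

/-- The classical Dedekind sum `s(h,k) = Σ_{r=0}^{k−1} B̄₁(hr/k)·B̄₁(r/k)`. -/
noncomputable def dedekindSum (h k : ℕ) : ℝ :=
  ∑ r ∈ Finset.range k, sawtooth ((h : ℝ) * r / k) * sawtooth ((r : ℝ) / k)

/-- The indicator function of `ℤ ⊆ ℝ`. -/
noncomputable def intIndicator (x : ℝ) : ℝ :=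
  open scoped Classical in
  if ∃ n : ℤ, x = (n : ℝ) then 1 else 0

/-- Macdonald's solid-angle sum `A_Δ(t)` of the dilate `tΔ` of the triangle `Δ`
with vertices `(0,0)`, `(h,0)`, `(0,k)`. -/
noncomputable def solidAngleSum (h k : ℕ) (t : ℝ) : ℝ :=
  (Set.ncard {p : ℤ × ℤ | 0 < p.1 ∧ 0 < p.2 ∧
      (k : ℝ) * p.1 + (h : ℝ) * p.2 < (h : ℝ) * k * t} : ℝ)
  + 1/2 * ((Set.ncard {x : ℤ | 0 < (x : ℝ) ∧ (x : ℝ) < (h : ℝ) * t} : ℝ)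
      + (Set.ncard {y : ℤ | 0 < (y : ℝ) ∧ (y : ℝ) < (k : ℝ) * t} : ℝ)
      + (Set.ncard {p : ℤ × ℤ | 0 < p.1 ∧ 0 < p.2 ∧
          (k : ℝ) * p.1 + (h : ℝ) * p.2 = (h : ℝ) * k * t} : ℝ))
  + 1/4
  + intIndicator ((h : ℝ) * t) * Real.arctan ((k : ℝ) / h) / (2 * π)
  + intIndicator ((k : ℝ) * t) * Real.arctan ((h : ℝ) / k) / (2 * π)

open Finset

/-!
For integer `t` all three vertices of `tΔ` are lattice points and the solid-angle sum is the area
`hk t² / 2`: the point reflection `(x, y) ↦ (ht - x, kt - y)` of the box `(0, ht) × (0, kt)`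
exchanges the lattice points below and above the hypotenuse, so the interior count plus half the
hypotenuse count is half the box count, while the vertex angles add up to `1/4 + 1/4`.

What remains is Dedekind's reciprocity law, proved in the classical elementary way. Writing
`hr = k ⌊hr/k⌋ + (hr mod k)` and using that `r ↦ hr mod k` permutes `{0, …, k - 1}`, both `s(h,k)`
and `Σ_r ⌊hr/k⌋²` are expressed through `Σ_r r (hr mod k)`. Counting the lattice points `(r, s)`
with `0 < s ≤ hr/k`, `r < k`, weighted by `2s - 1`, once by columns and once by rows (coprimality
keeps them off the diagonal `ks = hr`) turns `Σ_r ⌊hr/k⌋²` into `Σ_s (2s - 1) ⌊ks/h⌋`, which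
brings in `Σ_s s (ks mod h)` and closes the system of linear relations.
-/

section Reciprocity

variable {h k : ℕ}

lemma sum_range_mul_mod_comp {M : Type*} [AddCommMonoid M] (hco : h.Coprime k) (F : ℕ → M) :
    ∑ r ∈ range k, F (h * r % k) = ∑ r ∈ range k, F r := by
  rcases k.eq_zero_or_pos with rfl | hk
  · simp
  have hmaps : Set.MapsTo (fun r => h * r % k) (range k) (range k) :=
    fun r _ => mem_range.2 (Nat.mod_lt _ hk)
  have hinj : Set.InjOn (fun r => h * r % k) (range k) := fun a ha b hb hab => by
    have := Nat.ModEq.cancel_left_of_coprime hco.symm hab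
    rwa [Nat.ModEq, Nat.mod_eq_of_lt (mem_range.1 ha), Nat.mod_eq_of_lt (mem_range.1 hb)] at this
  exact sum_nbij _ hmaps hinj (surjOn_of_injOn_of_card_le _ hmaps hinj le_rfl) fun _ _ => rfl

lemma two_mul_sum_range {R : Type*} [CommRing R] (n : ℕ) :
    2 * ∑ r ∈ range n, (r : R) = n ^ 2 - n := by
  induction n with
  | zero => simp
  | succ n ih => rw [sum_range_succ, mul_add, ih]; push_cast; ring

lemma six_mul_sum_range_sq {R : Type*} [CommRing R] (n : ℕ) :
    6 * ∑ r ∈ range n, (r : R) ^ 2 = 2 * n ^ 3 - 3 * n ^ 2 + n := by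
  induction n with
  | zero => simp
  | succ n ih => rw [sum_range_succ, mul_add, ih]; push_cast; ring

lemma sum_Ico_one_two_mul_sub_one (n : ℕ) :
    ∑ s ∈ Ico 1 (n + 1), (2 * (s : ℤ) - 1) = n ^ 2 := by
  induction n with
  | zero => simp
  | succ n ih => rw [sum_Ico_succ_top (by omega), ih]; push_cast; ring

lemma sum_sq_eq_sum_mul_card_filter_le {ι : Type*} (s : Finset ι) (f : ι → ℕ) {n : ℕ}
    (hf : ∀ i ∈ s, f i < n) :
    ∑ i ∈ s, (f i : ℤ) ^ 2 = ∑ j ∈ Ico 1 n, (2 * (j : ℤ) - 1) * #(s.filter (j ≤ f ·)) := by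
  have layer : ∀ i ∈ s,
      (f i : ℤ) ^ 2 = ∑ j ∈ Ico 1 n, if j ≤ f i then 2 * (j : ℤ) - 1 else 0 := by
    intro i hi
    rw [← sum_filter, ← sum_Ico_one_two_mul_sub_one]
    congr 1
    ext j
    simp only [mem_filter, mem_Ico]
    have := hf i hi
    omega
  rw [sum_congr rfl layer, sum_comm]
  refine sum_congr rfl fun j _ => ?_
  rw [← sum_filter, sum_const, nsmul_eq_mul, mul_comm]

lemma filter_le_mul_div_eq_Ico (hh : 0 < h) (hk : 0 < k) (hco : h.Coprime k) {s : ℕ}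
    (hs : 0 < s) : (range k).filter (fun r => s ≤ h * r / k) = Ico (k * s / h + 1) k := by
  ext r
  simp only [mem_filter, mem_range, mem_Ico, Nat.le_div_iff_mul_le hk, Nat.succ_le_iff,
    Nat.div_lt_iff_lt_mul hh]
  constructor
  · rintro ⟨hr, hle⟩
    refine ⟨lt_of_le_of_ne (by linarith) fun he => ?_, hr⟩
    have hkr : k ∣ r := (Nat.Coprime.dvd_mul_left hco.symm).1 ⟨s, by linarith⟩
    have hr0 : 0 < r := Nat.pos_of_ne_zero (by rintro rfl; simp at hle; omega)
    exact absurd (Nat.le_of_dvd hr0 hkr) (by omega)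
  · rintro ⟨hlt, hr⟩
    exact ⟨hr, by linarith⟩

lemma sum_sq_mul_div_eq (hh : 0 < h) (hk : 0 < k) (hco : h.Coprime k) :
    ∑ r ∈ range k, ((h * r / k : ℕ) : ℤ) ^ 2
      = (k - 1) * (h - 1) ^ 2 - ∑ s ∈ range h, (2 * (s : ℤ) - 1) * (k * s / h : ℕ) := by
  have hlt : ∀ r ∈ range k, h * r / k < h := fun r hr =>
    (Nat.div_lt_iff_lt_mul hk).2 (Nat.mul_lt_mul_of_pos_left (mem_range.1 hr) hh)
  have hcount : ∀ s ∈ Ico 1 h,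
      (#((range k).filter (s ≤ h * · / k)) : ℤ) = k - 1 - (k * s / h : ℕ) := by
    intro s hs
    obtain ⟨hs1, hsh⟩ := mem_Ico.1 hs
    have hgk : k * s / h < k := (Nat.div_lt_iff_lt_mul hh).2 (Nat.mul_lt_mul_of_pos_left hsh hk)
    rw [filter_le_mul_div_eq_Ico hh hk hco hs1, Nat.card_Ico]
    omega
  have hodd : ∑ s ∈ Ico 1 h, (2 * (s : ℤ) - 1) = (h - 1) ^ 2 := by
    simpa [Nat.sub_add_cancel hh, Nat.cast_sub hh] using sum_Ico_one_two_mul_sub_one (h - 1)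
  rw [sum_sq_eq_sum_mul_card_filter_le _ _ hlt, sum_congr rfl fun s hs => by rw [hcount s hs],
    range_eq_Ico, sum_eq_sum_Ico_succ_bot hh, Nat.mul_zero, Nat.zero_div, Nat.cast_zero,
    mul_zero, zero_add, zero_add]
  simp only [mul_sub, sum_sub_distrib, ← sum_mul, hodd]
  ring

lemma sq_mul_sum_sq_mul_div_eq (hco : h.Coprime k) :
    (k : ℤ) ^ 2 * ∑ r ∈ range k, ((h * r / k : ℕ) : ℤ) ^ 2
      = (1 + h ^ 2) * ∑ r ∈ range k, (r : ℤ) ^ 2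
        - 2 * h * ∑ r ∈ range k, (r : ℤ) * (h * r % k : ℕ) := by
  have hmod : ∑ r ∈ range k, ((h * r % k : ℕ) : ℤ) ^ 2 = ∑ r ∈ range k, (r : ℤ) ^ 2 :=
    sum_range_mul_mod_comp hco fun n => (n : ℤ) ^ 2
  have hterm : ∀ r, (k : ℤ) ^ 2 * ((h * r / k : ℕ) : ℤ) ^ 2
      = h ^ 2 * (r : ℤ) ^ 2 - 2 * h * ((r : ℤ) * (h * r % k : ℕ))
        + ((h * r % k : ℕ) : ℤ) ^ 2 := by
    intro r
    have : (k : ℤ) * (h * r / k : ℕ) + (h * r % k : ℕ) = h * r := by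
      exact_mod_cast Nat.div_add_mod (h * r) k
    linear_combination ((k : ℤ) * (h * r / k : ℕ) - (h * r % k : ℕ) + h * r) * this
  rw [mul_sum, sum_congr rfl fun r _ => hterm r, sum_add_distrib, sum_sub_distrib, ← mul_sum,
    ← mul_sum, hmod]
  ring

lemma twelve_mul_sum_mul_mod_add (hh : 0 < h) (hk : 0 < k) (hco : h.Coprime k) :
    12 * (h : ℤ) ^ 2 * ∑ r ∈ range k, (r : ℤ) * (h * r % k : ℕ)
      + 12 * (k : ℤ) ^ 2 * ∑ s ∈ range h, (s : ℤ) * (k * s % h : ℕ)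
      = 3 * h ^ 3 * k ^ 2 + 3 * h ^ 2 * k ^ 3 - 9 * h ^ 2 * k ^ 2
        + h ^ 3 * k + h * k ^ 3 + h * k := by
  have hmod : ∑ s ∈ range h, ((k * s % h : ℕ) : ℤ) = ∑ s ∈ range h, (s : ℤ) :=
    sum_range_mul_mod_comp hco.symm fun n => (n : ℤ)
  have hterm : ∀ s, (h : ℤ) * ((2 * s - 1) * (k * s / h : ℕ))
      = 2 * k * s ^ 2 - k * s - 2 * (s * (k * s % h : ℕ)) + (k * s % h : ℕ) := fun s => by
    have : (h : ℤ) * (k * s / h : ℕ) + (k * s % h : ℕ) = k * s := by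
      exact_mod_cast Nat.div_add_mod (k * s) h
    linear_combination (2 * (s : ℤ) - 1) * this
  have hflip : (h : ℤ) * ∑ s ∈ range h, (2 * (s : ℤ) - 1) * (k * s / h : ℕ)
      = 2 * k * ∑ s ∈ range h, (s : ℤ) ^ 2 - k * ∑ s ∈ range h, (s : ℤ)
        - 2 * ∑ s ∈ range h, (s : ℤ) * (k * s % h : ℕ) + ∑ s ∈ range h, (s : ℤ) := by
    rw [mul_sum, sum_congr rfl fun s _ => hterm s, sum_add_distrib, sum_sub_distrib,
      sum_sub_distrib, ← mul_sum, ← mul_sum, ← mul_sum, hmod]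
  linear_combination 6 * (h : ℤ) * sq_mul_sum_sq_mul_div_eq hco + 6 * (k : ℤ) ^ 2 * hflip
    - 6 * (h : ℤ) * k ^ 2 * sum_sq_mul_div_eq hh hk hco
    + (h + (h : ℤ) ^ 3) * six_mul_sum_range_sq (R := ℤ) k
    + 2 * (k : ℤ) ^ 3 * six_mul_sum_range_sq (R := ℤ) h
    - 3 * (k : ℤ) ^ 2 * (k - 1) * two_mul_sum_range (R := ℤ) h

lemma sawtooth_eq_ite (x : ℝ) :
    sawtooth x = if Int.fract x = 0 then 0 else Int.fract x - 1 / 2 := by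
  rw [sawtooth]
  congr 1
  simp [Int.fract_eq_zero_iff, eq_comm]

lemma sawtooth_natCast_div (n : ℕ) (hk : 0 < k) :
    sawtooth (n / k) = if n % k = 0 then 0 else ((n % k : ℕ) : ℝ) / k - 1 / 2 := by
  rw [sawtooth_eq_ite, Int.fract_div_natCast_eq_div_natCast_mod]
  simp [hk.ne']

lemma dedekindSum_eq (hk : 0 < k) (hco : h.Coprime k) :
    dedekindSum h k = (∑ r ∈ range k, (r : ℝ) * (h * r % k : ℕ)) / k ^ 2 - (k - 1) / 4 := by
  have hmod_eq_zero : ∀ r ∈ range k, h * r % k = 0 ↔ r = 0 := fun r hr => by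
    refine ⟨fun h0 => ?_, fun h0 => by simp [h0]⟩
    have hkr : k ∣ r := (Nat.Coprime.dvd_mul_left hco.symm).1 (Nat.dvd_of_mod_eq_zero h0)
    exact Nat.eq_zero_of_dvd_of_lt hkr (mem_range.1 hr)
  have hterm : ∀ r ∈ range k, sawtooth ((h : ℝ) * r / k) * sawtooth ((r : ℝ) / k)
      = (((h * r % k : ℕ) : ℝ) / k - 1 / 2) * ((r : ℝ) / k - 1 / 2)
        - if r = 0 then 1 / 4 else 0 := by
    intro r hr
    rw [← Nat.cast_mul, sawtooth_natCast_div _ hk, sawtooth_natCast_div _ hk,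
      Nat.mod_eq_of_lt (mem_range.1 hr)]
    simp only [hmod_eq_zero r hr]
    split_ifs with h0 <;> norm_num [h0]
  have hexpand : ∀ r ∈ range k, (((h * r % k : ℕ) : ℝ) / k - 1 / 2) * ((r : ℝ) / k - 1 / 2)
      = (r : ℝ) * (h * r % k : ℕ) / k ^ 2 - (((h * r % k : ℕ) : ℝ) + r) / (2 * k) + 1 / 4 := by
    intro r _
    field_simp
    ring
  have hmod : ∑ r ∈ range k, ((h * r % k : ℕ) : ℝ) = ∑ r ∈ range k, (r : ℝ) :=
    sum_range_mul_mod_comp hco fun n => (n : ℝ)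
  rw [dedekindSum, sum_congr rfl hterm, sum_sub_distrib, sum_ite_eq' (range k) 0,
    if_pos (by simpa), sum_congr rfl hexpand, sum_add_distrib, sum_sub_distrib, ← sum_div,
    ← sum_div, sum_add_distrib, hmod, sum_const, card_range, nsmul_eq_mul]
  field_simp
  linear_combination -4 * (k : ℝ) * two_mul_sum_range (R := ℝ) k

theorem dedekindSum_add_dedekindSum (hh : 0 < h) (hk : 0 < k) (hco : h.Coprime k) :
    dedekindSum h k + dedekindSum k h
      = 1 / 12 * ((h : ℝ) / k + 1 / ((h : ℝ) * k) + (k : ℝ) / h) - 1 / 4 := by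
  have hint := congrArg (Int.cast : ℤ → ℝ) (twelve_mul_sum_mul_mod_add hh hk hco)
  simp only [Int.cast_add, Int.cast_sub, Int.cast_mul, Int.cast_pow, Int.cast_sum,
    Int.cast_natCast, Int.cast_ofNat] at hint
  rw [dedekindSum_eq hk hco, dedekindSum_eq hh hco.symm]
  field_simp
  linear_combination 4 * hint

end Reciprocity

lemma two_mul_card_filter_lt_add_card_filter_eq {α β : Type*} [AddCommGroup β] [LinearOrder β]
    [IsOrderedAddMonoid β] (s : Finset α) (f : α → β) (c : β) (σ : α → α)
    (hσ : ∀ p ∈ s, σ p ∈ s) (hσσ : ∀ p ∈ s, σ (σ p) = p)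
    (hf : ∀ p ∈ s, f (σ p) + f p = c + c) :
    2 * #(s.filter (f · < c)) + #(s.filter (f · = c)) = #s := by
  have hswap : #(s.filter (f · < c)) = #(s.filter (c < f ·)) := by
    refine card_nbij' σ σ (fun p hp => ?_) (fun p hp => ?_)
      (fun p hp => hσσ p (mem_filter.1 hp).1) (fun p hp => hσσ p (mem_filter.1 hp).1)
    · obtain ⟨hps, hlt⟩ := mem_filter.1 hp
      refine mem_filter.2 ⟨hσ p hps, lt_of_not_ge fun hle => ?_⟩
      exact (add_lt_add_of_le_of_lt hle hlt).ne (hf p hps)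
    · obtain ⟨hps, hgt⟩ := mem_filter.1 hp
      refine mem_filter.2 ⟨hσ p hps, lt_of_not_ge fun hle => ?_⟩
      exact (add_lt_add_of_le_of_lt hle hgt).ne' (hf p hps)
  have hsplit : #(s.filter (f · < c)) + #(s.filter (f · = c)) + #(s.filter (c < f ·)) = #s := by
    classical
    have hd₁ : Disjoint (s.filter (f · < c)) (s.filter (f · = c)) :=
      disjoint_filter.2 fun p _ hlt heq => hlt.ne heq
    have hd₂ : Disjoint (s.filter (f · < c) ∪ s.filter (f · = c)) (s.filter (c < f ·)) := by
      rw [← filter_or]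
      exact disjoint_filter.2 fun p _ hle hgt => not_le.2 hgt (le_of_lt_or_eq hle)
    rw [← card_union_of_disjoint hd₁, ← card_union_of_disjoint hd₂, ← filter_or, ← filter_or,
      filter_true_of_mem fun p _ => by simpa [or_assoc] using lt_trichotomy (f p) c]
  omega

lemma card_Ioo_zero_natCast (n : ℕ) : #(Ioo (0 : ℤ) n) = n - 1 := by
  rw [Int.card_Ioo]
  omega

lemma ncard_setOf_pos_lt_natCast (n : ℕ) :
    {x : ℤ | 0 < (x : ℝ) ∧ (x : ℝ) < n}.ncard = n - 1 := by
  have : {x : ℤ | 0 < (x : ℝ) ∧ (x : ℝ) < n} = ↑(Ioo (0 : ℤ) n) := by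
    ext x
    simp only [Set.mem_ofPred_eq, coe_Ioo, Set.mem_Ioo]
    norm_cast
  rw [this, Set.ncard_coe_finset, card_Ioo_zero_natCast]

section Triangle

variable {h k : ℕ} (t : ℕ)

lemma setOf_triangle_eq_coe_filter (hh : 0 < h) (hk : 0 < k) (P : ℝ → Prop) [DecidablePred P]
    (hP : ∀ x, P x → x ≤ (h : ℝ) * k * t) :
    {p : ℤ × ℤ | 0 < p.1 ∧ 0 < p.2 ∧ P ((k : ℝ) * p.1 + (h : ℝ) * p.2)}
      = ↑((Ioo 0 ((h * t : ℕ) : ℤ) ×ˢ Ioo 0 ((k * t : ℕ) : ℤ)).filter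
          fun p => P ((k : ℝ) * p.1 + (h : ℝ) * p.2)) := by
  ext p
  simp only [Set.mem_ofPred_eq, coe_filter, mem_product, mem_Ioo]
  constructor
  · rintro ⟨hx, hy, hp⟩
    have hx' : (0 : ℝ) < p.1 := by exact_mod_cast hx
    have hy' : (0 : ℝ) < p.2 := by exact_mod_cast hy
    have hh' : (0 : ℝ) < h := by exact_mod_cast hh
    have hk' : (0 : ℝ) < k := by exact_mod_cast hk
    have hle := hP _ hp
    have hx_lt : (p.1 : ℝ) < h * t := lt_of_mul_lt_mul_left (by nlinarith) hk'.le
    have hy_lt : (p.2 : ℝ) < k * t := lt_of_mul_lt_mul_left (by nlinarith) hh'.le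
    exact ⟨⟨⟨hx, by exact_mod_cast hx_lt⟩, hy, by exact_mod_cast hy_lt⟩, hp⟩
  · rintro ⟨⟨⟨hx, -⟩, hy, -⟩, hp⟩
    exact ⟨hx, hy, hp⟩

lemma two_mul_ncard_interior_add_ncard_hypotenuse (hh : 0 < h) (hk : 0 < k) :
    2 * {p : ℤ × ℤ | 0 < p.1 ∧ 0 < p.2 ∧ (k : ℝ) * p.1 + (h : ℝ) * p.2 < (h : ℝ) * k * t}.ncard
      + {p : ℤ × ℤ | 0 < p.1 ∧ 0 < p.2 ∧ (k : ℝ) * p.1 + (h : ℝ) * p.2 = (h : ℝ) * k * t}.ncard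
      = (h * t - 1) * (k * t - 1) := by
  rw [setOf_triangle_eq_coe_filter t hh hk (· < _) fun _ => le_of_lt,
    setOf_triangle_eq_coe_filter t hh hk (· = _) fun _ => le_of_eq, Set.ncard_coe_finset,
    Set.ncard_coe_finset, two_mul_card_filter_lt_add_card_filter_eq _ _ _
      (fun p => (((h * t : ℕ) : ℤ) - p.1, ((k * t : ℕ) : ℤ) - p.2)),
    card_product, card_Ioo_zero_natCast, card_Ioo_zero_natCast]
  · intro p hp
    simp only [mem_product, mem_Ioo] at hp ⊢
    omega
  · simp
  · intro p _
    push_cast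
    ring

end Triangle

lemma intIndicator_natCast (n : ℕ) : intIndicator n = 1 :=
  if_pos ⟨n, by simp⟩

lemma arctan_div_add_arctan_div {a b : ℝ} (ha : 0 < a) (hb : 0 < b) :
    arctan (a / b) + arctan (b / a) = π / 2 := by
  rw [← inv_div, arctan_inv_of_pos (div_pos hb ha)]
  ring

theorem solidAngleSum_natCast {h k t : ℕ} (hh : 0 < h) (hk : 0 < k) (ht : 0 < t) :
    solidAngleSum h k t = h * k / 2 * t ^ 2 := by
  have hht : 1 ≤ h * t := Nat.mul_pos hh ht
  have hkt : 1 ≤ k * t := Nat.mul_pos hk ht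
  have hcount := congrArg (Nat.cast : ℕ → ℝ) (two_mul_ncard_interior_add_ncard_hypotenuse t hh hk)
  push_cast [Nat.cast_sub hht, Nat.cast_sub hkt] at hcount
  have hangles : arctan ((k : ℝ) / h) / (2 * π) + arctan ((h : ℝ) / k) / (2 * π) = 1 / 4 := by
    rw [← add_div, arctan_div_add_arctan_div (by positivity) (by positivity)]
    field_simp
    ring
  rw [solidAngleSum, ← Nat.cast_mul h t, ← Nat.cast_mul k t, ncard_setOf_pos_lt_natCast,
    ncard_setOf_pos_lt_natCast, intIndicator_natCast, intIndicator_natCast]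
  push_cast [Nat.cast_sub hht, Nat.cast_sub hkt]
  linear_combination hcount / 2 + hangles

/-- For integer dilations `t`, the solid-angle sum of the right triangle with legs `h, k`
is `(hk/2)t² + (1/12)(h/k + 1/(hk) + k/h) − 1/4 − s(h,k) − s(k,h)`. -/
theorem solidAngleSum_int_dilation (h k : ℕ) (hh : 0 < h) (hk : 0 < k)
    (hco : Nat.Coprime h k) (t : ℕ) (ht : 0 < t) :
    solidAngleSum h k (t : ℝ) =
      (h : ℝ) * k / 2 * (t : ℝ) ^ 2
      + 1/12 * ((h : ℝ)/k + 1/((h : ℝ)*k) + (k : ℝ)/h) - 1/4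
      - dedekindSum h k - dedekindSum k h := by
  rw [solidAngleSum_natCast hh hk ht]
  linear_combination dedekindSum_add_dedekindSum hh hk hco
end

section
/- Let h and k be coprime positive integers and let t be a positive real number. If hkt ∉ ℤ, then #{(x,y) ∈ ℤ² : x ≥ 0, y ≥ 0, kx + hy = hkt} = 0. If hkt = n is a positive integer, then #{(x,y) ∈ ℤ² : x ≥ 0, y ≥ 0, kx + hy = n} = n/(hk) − {h'n/k} − {k'n/h} + 1, where h' is any integer with h'h ≡ 1 (mod k) and k' is any integer with k'k ≡ 1 (mod h). -/
/-!
Write `n = k x + h y`. Modulo `h` the coordinate `x` is forced to be `k' n`, and modulo `k`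
the coordinate `y` is forced to be `h' n`; with `x₀ = k' n mod h` and `y₀ = h' n mod k` we get
`n = k x₀ + h y₀ + h k M` for an integer `M ≥ -1`, and the nonnegative solutions are exactly
`(x₀ + m h, y₀ + (M - m) k)` for `0 ≤ m ≤ M`. Hence there are `M + 1` of them, and
`M = n / (h k) - x₀ / h - y₀ / k` with `x₀ / h = {k' n / h}` and `y₀ / k = {h' n / k}`.
-/

theorem Int.mul_emod_modEq_of_mul_modEq_one {a b a' : ℤ} (ha' : a' * a ≡ 1 [ZMOD b]) (n : ℤ) :
    a * (a' * n % b) ≡ n [ZMOD b] :=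
  calc a * (a' * n % b) ≡ a * (a' * n) [ZMOD b] := (Int.mod_modEq _ _).mul_left _
    _ = a' * a * n := by ring
    _ ≡ 1 * n [ZMOD b] := ha'.mul_right _
    _ = n := one_mul n

theorem IsCoprime.mul_dvd_sub_sub_of_modEq {a b x y n : ℤ} (hab : IsCoprime a b)
    (hx : a * x ≡ n [ZMOD b]) (hy : b * y ≡ n [ZMOD a]) : a * b ∣ n - a * x - b * y := by
  refine hab.mul_dvd ?_ ?_
  · rw [sub_right_comm]
    exact hy.dvd.sub (dvd_mul_right a x)
  · exact hx.dvd.sub (dvd_mul_right b y)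

section NonnegSolutions

variable {a b x₀ y₀ M n : ℤ}

theorem nonneg_solutions_eq_image (ha : 0 < a) (hb : 0 < b) (hab : IsCoprime a b)
    (hx₀ : 0 ≤ x₀) (hx₀b : x₀ < b) (hy₀ : 0 ≤ y₀) (hy₀a : y₀ < a)
    (hn : a * x₀ + b * y₀ + a * b * M = n) :
    {p : ℤ × ℤ | 0 ≤ p.1 ∧ 0 ≤ p.2 ∧ a * p.1 + b * p.2 = n} =
      (fun m : ℤ => (x₀ + m * b, y₀ + (M - m) * a)) '' Set.Icc 0 M := by
  ext ⟨x, y⟩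
  simp only [Set.mem_image, Set.mem_Icc, Prod.mk.injEq]
  constructor
  · rintro ⟨hx, hy, hxy⟩
    obtain ⟨m, hm⟩ : b ∣ x - x₀ :=
      hab.symm.dvd_of_dvd_mul_left ⟨y₀ + a * M - y, by linear_combination hxy - hn⟩
    have hy_eq : y = y₀ + (M - m) * a := by
      have : b * (y - (y₀ + (M - m) * a)) = 0 := by linear_combination hxy - hn - a * hm
      linarith [(mul_eq_zero.mp this).resolve_left hb.ne']
    refine ⟨m, ⟨?_, ?_⟩, by linarith, hy_eq.symm⟩
    · nlinarith
    · nlinarith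
  · rintro ⟨m, ⟨hm0, hmM⟩, rfl, rfl⟩
    refine ⟨by positivity, ?_, by linear_combination hn⟩
    have : 0 ≤ M - m := by linarith
    positivity

theorem ncard_nonneg_solutions (ha : 0 < a) (hb : 0 < b) (hab : IsCoprime a b)
    (hx₀ : 0 ≤ x₀) (hx₀b : x₀ < b) (hy₀ : 0 ≤ y₀) (hy₀a : y₀ < a)
    (hn : a * x₀ + b * y₀ + a * b * M = n) (hn0 : 0 ≤ n) :
    ({p : ℤ × ℤ | 0 ≤ p.1 ∧ 0 ≤ p.2 ∧ a * p.1 + b * p.2 = n}.ncard : ℤ) = M + 1 := by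
  have hM : -1 ≤ M := by
    by_contra! hM
    nlinarith [mul_pos ha hb]
  have hinj : Set.InjOn (fun m : ℤ => (x₀ + m * b, y₀ + (M - m) * a)) (Set.Icc 0 M) :=
    fun m _ m' _ hmm' => mul_right_cancel₀ hb.ne' (add_left_cancel (congrArg Prod.fst hmm'))
  rw [nonneg_solutions_eq_image ha hb hab hx₀ hx₀b hy₀ hy₀a hn, hinj.ncard_image,
    ← Finset.coe_Icc, Set.ncard_coe_finset, Int.card_Icc_of_le (a := 0) (b := M) (by linarith),
    sub_zero]

end NonnegSolutions

theorem lattice_points_on_hypotenuse_general (h k : ℕ) (hh : 0 < h) (hk : 0 < k)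
    (hco : Nat.Coprime h k) (t : ℝ) :
    ((¬ ∃ m : ℤ, (h : ℝ) * k * t = (m : ℝ)) →
      Set.ncard {p : ℤ × ℤ | 0 ≤ p.1 ∧ 0 ≤ p.2 ∧
        (k : ℝ) * p.1 + (h : ℝ) * p.2 = (h : ℝ) * k * t} = 0)
    ∧ (∀ n : ℕ, 0 < n → (h : ℝ) * k * t = (n : ℝ) →
        ∀ h' k' : ℤ, h' * (h : ℤ) ≡ 1 [ZMOD (k : ℤ)] → k' * (k : ℤ) ≡ 1 [ZMOD (h : ℤ)] →
          (Set.ncard {p : ℤ × ℤ | 0 ≤ p.1 ∧ 0 ≤ p.2 ∧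
              (k : ℤ) * p.1 + (h : ℤ) * p.2 = (n : ℤ)} : ℝ) =
            (n : ℝ) / ((h : ℝ) * k) - Int.fract ((h' : ℝ) * n / k)
              - Int.fract ((k' : ℝ) * n / h) + 1) := by
  refine ⟨fun hne => ?_, fun n _ _ h' k' hh' hk' => ?_⟩
  · convert Set.ncard_empty (ℤ × ℤ)
    refine Set.eq_empty_of_forall_notMem ?_
    rintro p ⟨-, -, hp⟩
    exact hne ⟨k * p.1 + h * p.2, by push_cast; linarith⟩
  set x₀ : ℤ := k' * n % h
  set y₀ : ℤ := h' * n % k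
  have hhZ : (0 : ℤ) < h := by exact_mod_cast hh
  have hkZ : (0 : ℤ) < k := by exact_mod_cast hk
  have hcop : IsCoprime (k : ℤ) h := Nat.isCoprime_iff_coprime.mpr hco.symm
  obtain ⟨M, hM⟩ : (k : ℤ) * h ∣ n - k * x₀ - h * y₀ := hcop.mul_dvd_sub_sub_of_modEq
    (Int.mul_emod_modEq_of_mul_modEq_one hk' n) (Int.mul_emod_modEq_of_mul_modEq_one hh' n)
  have hn : k * x₀ + h * y₀ + k * h * M = (n : ℤ) := by linarith
  have hcount := ncard_nonneg_solutions hkZ hhZ hcop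
    (Int.emod_nonneg _ hhZ.ne') (Int.emod_lt_of_pos _ hhZ)
    (Int.emod_nonneg _ hkZ.ne') (Int.emod_lt_of_pos _ hkZ) hn (Int.natCast_nonneg n)
  have hfract_h' : Int.fract ((h' : ℝ) * n / k) = y₀ / k := by
    simpa using Int.fract_div_intCast_eq_div_intCast_mod (k := ℝ) (m := h' * n) (n := k)
  have hfract_k' : Int.fract ((k' : ℝ) * n / h) = x₀ / h := by
    simpa using Int.fract_div_intCast_eq_div_intCast_mod (k := ℝ) (m := k' * n) (n := h)
  rw [hfract_h', hfract_k', ← Int.cast_natCast (R := ℝ) (Set.ncard _), hcount,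
    ← Int.cast_natCast (R := ℝ) n, ← hn]
  push_cast
  field_simp
  ring

/-- The number of lattice points on the dilated hypotenuse of the right triangle with
legs `h, k`: zero when `hkt ∉ ℤ`, and given by Popoviciu's formula when `hkt = n ∈ ℤ_{>0}`. -/
theorem lattice_points_on_hypotenuse (h k : ℕ) (hh : 0 < h) (hk : 0 < k)
    (hco : Nat.Coprime h k) (t : ℝ) (ht : 0 < t) :
    ((¬ ∃ m : ℤ, (h : ℝ) * k * t = (m : ℝ)) →
      Set.ncard {p : ℤ × ℤ | 0 ≤ p.1 ∧ 0 ≤ p.2 ∧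
        (k : ℝ) * p.1 + (h : ℝ) * p.2 = (h : ℝ) * k * t} = 0)
    ∧ (∀ n : ℕ, 0 < n → (h : ℝ) * k * t = (n : ℝ) →
        ∀ h' k' : ℤ, h' * (h : ℤ) ≡ 1 [ZMOD (k : ℤ)] → k' * (k : ℤ) ≡ 1 [ZMOD (h : ℤ)] →
          (Set.ncard {p : ℤ × ℤ | 0 ≤ p.1 ∧ 0 ≤ p.2 ∧
              (k : ℤ) * p.1 + (h : ℤ) * p.2 = (n : ℤ)} : ℝ) =
            (n : ℝ) / ((h : ℝ) * k) - Int.fract ((h' : ℝ) * n / k)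
              - Int.fract ((k' : ℝ) * n / h) + 1) :=
  lattice_points_on_hypotenuse_general h k hh hk hco t
end
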